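/- arXiv:2601.19805 — 4 statements merged into one kernel-verified Lean document; each statement's English description precedes it below -/
import Mathlib

section
/- Let T be a full binary rooted tree with leaf set L, and let S ⊊ L be a proper subset which is the union of doad sets S_1, …, S_k of T, where k is minimal (S cannot be written as the union of fewer than k doad sets of T). Then the sets S_1, …, S_k are pairwise disjoint. -/
open TensorProduct PiTensorProduct

namespace TNS

/-- A full binary rooted tree with leaves labelled by `L` (together with a choice of
left and right child at every node, i.e. a plane structure, which is irrelevant for
the combinatorics of descendant leaf sets). -/
inductive BTree (L : Type*) : Type _ where
  | leaf : L → BTree L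
  | node : BTree L → BTree L → BTree L

namespace BTree

variable {L : Type*}

/-- The list of leaf labels, from left to right. -/
def leafList : BTree L → List L
  | .leaf l => [l]
  | .node lt rt => lt.leafList ++ rt.leafList

/-- The set of leaf labels. -/
def leafSet (t : BTree L) : Set L := {l | l ∈ t.leafList}

/-- The subtree at a position (a path of left (`false`) / right (`true`) steps from
the root), if the position is a vertex of the tree. -/
def subtreeAt : BTree L → List Bool → Option (BTree L)
  | t, [] => some t
  | .leaf _, _ :: _ => none
  | .node lt _, false :: p => lt.subtreeAt p
  | .node _ rt, true :: p => rt.subtreeAt p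

/-- `p` is a vertex of `t`; vertices are encoded by their 0/1-path from the root.
In the descendant order, `p` is a descendant of `q` iff `q` is a prefix of `p`
(`q <+: p`). -/
def IsVertex (t : BTree L) (p : List Bool) : Prop := (t.subtreeAt p).isSome

/-- `des t p`: the set of leaves descending from the vertex `p`. -/
def des (t : BTree L) (p : List Bool) : Set L :=
  match t.subtreeAt p with
  | some s => s.leafSet
  | none => ∅

/-- `anti t p`: the complement of `des t p` in the leaf set. -/
def anti (t : BTree L) (p : List Bool) : Set L := t.leafSet \ t.des p

/-- A doad set: a set of leaves of the form `des v` or `anti v` for a vertex `v`. -/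
def IsDoad (t : BTree L) (S : Set L) : Prop :=
  ∃ p, t.IsVertex p ∧ (S = t.des p ∨ S = t.anti p)

/-- `t` is a tree on the leaf set `L`: its leaves are pairwise distinct and exhaust `L`. -/
def IsTreeOn (t : BTree L) : Prop := t.leafList.Nodup ∧ ∀ l : L, l ∈ t.leafList

/-- `S` is a union of at most `m` doad sets of `t`. -/
def IsUnionOfAtMostDoads (t : BTree L) (m : ℕ) (S : Set L) : Prop :=
  ∃ (k : ℕ) (F : Fin k → Set L), k ≤ m ∧ (∀ i, t.IsDoad (F i)) ∧ (⋃ i, F i) = S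

end BTree

namespace BTree

variable {L : Type*}

lemma mem_leafList_of_subtreeAt :
    ∀ (t : BTree L) (p : List Bool) (s : BTree L),
      t.subtreeAt p = some s → ∀ x, x ∈ s.leafList → x ∈ t.leafList
  | t, [], s, h, x, hx => by
      simp only [subtreeAt] at h; cases h; exact hx
  | .leaf _, _ :: _, s, h, x, hx => by simp [subtreeAt] at h
  | .node lt rt, false :: p, s, h, x, hx => by
      simp only [subtreeAt] at h
      exact List.mem_append.mpr (Or.inl (mem_leafList_of_subtreeAt lt p s h x hx))
  | .node lt rt, true :: p, s, h, x, hx => by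
      simp only [subtreeAt] at h
      exact List.mem_append.mpr (Or.inr (mem_leafList_of_subtreeAt rt p s h x hx))

lemma des_subset_leafSet (t : BTree L) (p : List Bool) : t.des p ⊆ t.leafSet := by
  intro x hx
  unfold des at hx
  cases h : t.subtreeAt p with
  | none => rw [h] at hx; exact absurd hx (Set.notMem_empty x)
  | some s =>
      rw [h] at hx
      exact mem_leafList_of_subtreeAt t p s h x hx

lemma des_nil (t : BTree L) : t.des [] = t.leafSet := by cases t <;> rfl

lemma des_node_false (lt rt : BTree L) (p : List Bool) :
    (node lt rt).des (false :: p) = lt.des p := rfl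

lemma des_node_true (lt rt : BTree L) (p : List Bool) :
    (node lt rt).des (true :: p) = rt.des p := rfl

lemma des_leaf_cons (l : L) (b : Bool) (p : List Bool) :
    (leaf l).des (b :: p) = ∅ := rfl

/-- Laminar property of the descendant sets. -/
lemma laminar : ∀ (t : BTree L), t.leafList.Nodup → ∀ p q : List Bool,
    t.des p ⊆ t.des q ∨ t.des q ⊆ t.des p ∨ Disjoint (t.des p) (t.des q)
  | t, hnd, [], q => Or.inr (Or.inl (by rw [des_nil]; exact des_subset_leafSet t q))
  | t, hnd, b :: p, [] => Or.inl (by rw [des_nil]; exact des_subset_leafSet t _)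
  | .leaf l, hnd, b :: p, c :: q =>
      Or.inr (Or.inr (by rw [des_leaf_cons]; exact Set.empty_disjoint _))
  | .node lt rt, hnd, b :: p, c :: q => by
      rw [leafList, List.nodup_append] at hnd
      obtain ⟨hl, hr, hdisj⟩ := hnd
      have hLR : Disjoint lt.leafSet rt.leafSet := by
        rw [Set.disjoint_left]; intro x hx hx'
        exact hdisj x hx x hx' rfl
      cases b <;> cases c
      · rw [des_node_false, des_node_false]; exact laminar lt hl p q
      · rw [des_node_false, des_node_true]
        exact Or.inr (Or.inr (hLR.mono (des_subset_leafSet lt p) (des_subset_leafSet rt q)))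
      · rw [des_node_true, des_node_false]
        exact Or.inr (Or.inr ((hLR.symm).mono (des_subset_leafSet rt p) (des_subset_leafSet lt q)))
      · rw [des_node_true, des_node_true]; exact laminar rt hr p q

end BTree

/-- If a proper subset `S` of the leaf set is the union of doad sets `S_1, …, S_k`
with `k` minimal, then the `S_i` are pairwise disjoint. -/
theorem statement3 {L : Type*} (t : BTree L) (hnd : t.leafList.Nodup)
    (S : Set L) (hS : S ⊂ t.leafSet) (k : ℕ) (F : Fin k → Set L)
    (hdoad : ∀ i, t.IsDoad (F i)) (hcov : (⋃ i, F i) = S)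
    (hmin : ∀ (m : ℕ) (G : Fin m → Set L),
      (∀ i, t.IsDoad (G i)) → (⋃ i, G i) = S → k ≤ m) :
    ∀ i j, i ≠ j → Disjoint (F i) (F j) := by
  -- If one set is contained in another, we can drop it, contradicting minimality.
  have drop : ∀ i j : Fin k, i ≠ j → F i ⊆ F j → False := by
    intro i j hij hsub
    obtain ⟨m, rfl⟩ : ∃ m, k = m + 1 := ⟨k - 1, by have := i.pos; omega⟩
    have hG : (⋃ a, F (i.succAbove a)) = S := by
      apply subset_antisymm
      · rw [← hcov]
        exact Set.iUnion_subset fun a => Set.subset_iUnion F _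
      · rw [← hcov]
        apply Set.iUnion_subset
        intro b x hx
        rcases eq_or_ne b i with rfl | hbi
        · obtain ⟨a, ha⟩ := (Fin.exists_succAbove_eq hij.symm)
          exact Set.mem_iUnion.mpr ⟨a, by rw [ha]; exact hsub hx⟩
        · obtain ⟨a, ha⟩ := (Fin.exists_succAbove_eq hbi)
          exact Set.mem_iUnion.mpr ⟨a, by rw [ha]; exact hx⟩
    have := hmin m (fun a => F (i.succAbove a)) (fun a => hdoad _) hG
    omega
  -- If two sets cover the whole leaf set, this contradicts `S ⊊ leafSet`.
  have cover : ∀ i j : Fin k, t.leafSet ⊆ F i ∪ F j → False := by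
    intro i j hc
    obtain ⟨x, hx, hxS⟩ := Set.exists_of_ssubset hS
    apply hxS
    rw [← hcov]
    rcases hc hx with h | h
    · exact Set.mem_iUnion.mpr ⟨i, h⟩
    · exact Set.mem_iUnion.mpr ⟨j, h⟩
  intro i j hij
  by_contra hdisj
  obtain ⟨p, -, hp⟩ := hdoad i
  obtain ⟨q, -, hq⟩ := hdoad j
  have hlam := BTree.laminar t hnd p q
  rcases hp with hp | hp <;> rcases hq with hq | hq <;>
      rcases hlam with h | h | h
  -- des / des
  · exact drop i j hij (by rw [hp, hq]; exact h)
  · exact drop j i hij.symm (by rw [hp, hq]; exact h)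
  · exact hdisj (by rw [hp, hq]; exact h)
  -- des / anti
  · refine hdisj ?_
    rw [hp, hq]
    exact (Set.disjoint_sdiff_right).mono_left h
  · refine cover i j ?_
    rw [hp, hq]
    intro x hx
    by_cases hxq : x ∈ t.des q
    · exact Or.inl (h hxq)
    · exact Or.inr ⟨hx, hxq⟩
  · refine drop i j hij ?_
    rw [hp, hq]
    intro x hx
    exact ⟨t.des_subset_leafSet p hx, fun hx' => (Set.disjoint_left.mp h hx) hx'⟩
  -- anti / des
  · refine cover i j ?_
    rw [hp, hq]
    intro x hx
    by_cases hxp : x ∈ t.des p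
    · exact Or.inr (h hxp)
    · exact Or.inl ⟨hx, hxp⟩
  · refine hdisj ?_
    rw [hp, hq]
    exact (Set.disjoint_sdiff_left).mono_right h
  · refine drop j i hij.symm ?_
    rw [hp, hq]
    intro x hx
    exact ⟨t.des_subset_leafSet q hx, fun hx' => (Set.disjoint_left.mp h hx') hx⟩
  -- anti / anti
  · refine drop j i hij.symm ?_
    rw [hp, hq]
    exact Set.diff_subset_diff_right h
  · refine drop i j hij ?_
    rw [hp, hq]
    exact Set.diff_subset_diff_right h
  · refine cover i j ?_
    rw [hp, hq]
    intro x hx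
    by_cases hxp : x ∈ t.des p
    · exact Or.inr ⟨hx, fun hxq => Set.disjoint_left.mp h hxp hxq⟩
    · exact Or.inl ⟨hx, hxp⟩

end TNS
end

section
/- Let K be a field, I a finite set, (V_i)_{i∈I} finite-dimensional K-vector spaces, and t ∈ ⨂_{i∈I} V_i. Let S_1, …, S_k be pairwise disjoint subsets of I with union S. Then rk_S(t) ≤ ∏_{j=1}^{k} rk_{S_j}(t). -/
open TensorProduct PiTensorProduct

namespace TNS

section FlatteningRank

lemma restrict_update_of_mem {I : Type*} {V : I → Type*} [DecidableEq I] {S : Set I}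
    (v : ∀ i, V i) {i : I} (hi : i ∈ S) (x : V i) :
    (fun j : S => Function.update v i x j) =
      Function.update (fun j : S => v j) ⟨i, hi⟩ x := by
  funext j
  rcases eq_or_ne j ⟨i, hi⟩ with rfl | hj
  · simp
  · have h1 : (j : I) ≠ i := fun h => hj (Subtype.ext h)
    simp [Function.update_of_ne h1, Function.update_of_ne hj]

lemma restrict_update_of_not_mem {I : Type*} {V : I → Type*} [DecidableEq I] {S : Set I}
    (v : ∀ i, V i) {i : I} (hi : i ∉ S) (x : V i) :
    (fun j : S => Function.update v i x j) = fun j : S => v j := by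
  funext j
  have h1 : (j : I) ≠ i := fun h => hi (h ▸ j.2)
  simp [Function.update_of_ne h1]

variable (K : Type*) [Field K] {I : Type*} (V : I → Type*)
  [∀ i, AddCommGroup (V i)] [∀ i, Module K (V i)]

/-- The multilinear map splitting a family of vectors into the part indexed by `S`
and the part indexed by the complement of `S`, as a two-fold tensor product. -/
noncomputable def splitML (S : Set I) :
    MultilinearMap K V ((⨂[K] i : S, V i) ⊗[K] (⨂[K] i : ↥(Sᶜ), V i)) where
  toFun v := (⨂ₜ[K] i : S, v i) ⊗ₜ[K] (⨂ₜ[K] i : ↥(Sᶜ), v i)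
  map_update_add' := by
    intro dec v i x y
    by_cases hi : i ∈ S
    · have hc : i ∉ (Sᶜ : Set I) := by simp [hi]
      simp only [restrict_update_of_mem v hi, restrict_update_of_not_mem v hc,
        MultilinearMap.map_update_add, TensorProduct.add_tmul]
    · have hc : i ∈ (Sᶜ : Set I) := hi
      simp only [restrict_update_of_mem v hc, restrict_update_of_not_mem v hi,
        MultilinearMap.map_update_add, TensorProduct.tmul_add]
  map_update_smul' := by
    intro dec v i c x
    by_cases hi : i ∈ S
    · have hc : i ∉ (Sᶜ : Set I) := by simp [hi]
      simp only [restrict_update_of_mem v hi, restrict_update_of_not_mem v hc,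
        MultilinearMap.map_update_smul, TensorProduct.smul_tmul']
    · have hc : i ∈ (Sᶜ : Set I) := hi
      simp only [restrict_update_of_mem v hc, restrict_update_of_not_mem v hi,
        MultilinearMap.map_update_smul, TensorProduct.tmul_smul]

/-- The canonical identification `⨂_{i ∈ I} V i → (⨂_{i ∈ S} V i) ⊗ (⨂_{i ∈ I∖S} V i)`. -/
noncomputable def splitMap (S : Set I) :
    (⨂[K] i, V i) →ₗ[K] ((⨂[K] i : S, V i) ⊗[K] (⨂[K] i : ↥(Sᶜ), V i)) :=
  PiTensorProduct.lift (splitML K V S)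

/-- The contraction map `(⨂_{i ∈ S} V i)* → ⨂_{i ∈ I∖S} V i`, `g ↦ g ⌟ t`, of a tensor
`t ∈ ⨂_{i ∈ I} V i`, under the canonical identification
`⨂_{i ∈ I} V i ≅ (⨂_{i ∈ S} V i) ⊗ (⨂_{i ∈ I∖S} V i)`; on decomposable tensors,
`g ⌟ (x ⊗ y) = g(x) • y`. -/
noncomputable def contractionMap (S : Set I) (t : ⨂[K] i, V i) :
    Module.Dual K (⨂[K] i : S, V i) →ₗ[K] (⨂[K] i : ↥(Sᶜ), V i) :=
  (TensorProduct.lid K (⨂[K] i : ↥(Sᶜ), V i)).toLinearMap ∘ₗ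
    (LinearMap.applyₗ (splitMap K V S t)) ∘ₗ
    (LinearMap.rTensorHom (⨂[K] i : ↥(Sᶜ), V i))

/-- The flattening rank `rk_S(t)`: the dimension of the image of the contraction map
`(⨂_{i ∈ S} V i)* → ⨂_{i ∈ I∖S} V i`, `g ↦ g ⌟ t`. -/
noncomputable def flatRank (S : Set I) (t : ⨂[K] i, V i) : ℕ :=
  Module.finrank K (LinearMap.range (contractionMap K V S t))

end FlatteningRank


section Aux


variable {K : Type*} [Field K]

theorem piTensor_finite {ι : Type*} [Fintype ι] (W : ι → Type*)
    [∀ i, AddCommGroup (W i)] [∀ i, Module K (W i)] [∀ i, FiniteDimensional K (W i)] :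
    Module.Finite K (⨂[K] i, W i) := by
  classical
  have hex := fun i => Module.Finite.exists_fin (R := K) (M := W i)
  choose n s hs using hex
  set F : (∀ i, Fin (n i)) → (⨂[K] i, W i) := fun f => ⨂ₜ[K] i, s i (f i) with hF
  have hspan : Submodule.span K (Set.range F) = ⊤ := by
    rw [eq_top_iff, ← PiTensorProduct.span_tprod_eq_top, Submodule.span_le]
    rintro x ⟨v, rfl⟩
    have hv : ∀ i, ∃ c : Fin (n i) → K, ∑ j, c j • s i j = v i := by
      intro i
      have : v i ∈ Submodule.span K (Set.range (s i)) := by rw [hs i]; trivial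
      rwa [Submodule.mem_span_range_iff_exists_fun] at this
    choose c hc using hv
    have : (⨂ₜ[K] i, v i) = ∑ r : ∀ i, Fin (n i), (∏ i, c i (r i)) • F r := by
      conv_lhs => rw [show v = fun i => ∑ j, c i j • s i j from funext fun i => (hc i).symm]
      rw [MultilinearMap.map_sum (PiTensorProduct.tprod K) (fun i j => c i j • s i j)]
      exact Finset.sum_congr rfl fun r _ => MultilinearMap.map_smul_univ (PiTensorProduct.tprod K) _ _
    rw [this]
    exact Submodule.sum_mem _ fun r _ =>
      Submodule.smul_mem _ _ (Submodule.subset_span ⟨r, rfl⟩)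
  exact ⟨by rw [← hspan]; exact Submodule.fg_span (Set.finite_range F)⟩

theorem finrank_finset_sup_le {Z : Type*} [AddCommGroup Z] [Module K Z] [FiniteDimensional K Z]
    {L : Type*} (s : Finset L) (p : L → Submodule K Z) :
    Module.finrank K ↥(s.sup p) ≤ ∑ l ∈ s, Module.finrank K (p l) := by
  classical
  induction s using Finset.cons_induction with
  | empty => simp
  | cons a t ha ih =>
    rw [Finset.sup_cons, Finset.sum_cons]
    exact (Submodule.finrank_add_le_finrank_add_finrank _ _).trans (Nat.add_le_add_left ih _)

theorem bilin_rank {U W Z : Type*} [AddCommGroup U] [Module K U] [AddCommGroup W] [Module K W]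
    [AddCommGroup Z] [Module K Z] [FiniteDimensional K U] [FiniteDimensional K W]
    [FiniteDimensional K Z] (f : U →ₗ[K] W →ₗ[K] Z) (r s : ℕ)
    (h1 : Module.finrank K (LinearMap.range f) ≤ r)
    (h2 : ∀ u, Module.finrank K (LinearMap.range (f u)) ≤ s) :
    Module.finrank K (LinearMap.range (TensorProduct.lift f)) ≤ r * s := by
  classical
  set R := LinearMap.range f with hR
  set m := Module.finrank K R with hm
  let bR : Module.Basis (Fin m) K R := Module.finBasis K R
  have hsel : ∀ l : Fin m, ∃ u : U, f u = (bR l : W →ₗ[K] Z) := fun l => (bR l).2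
  choose u hu using hsel
  set W0 : Submodule K Z := Finset.univ.sup (fun l : Fin m => LinearMap.range (f (u l))) with hW0
  have hle : ∀ l : Fin m, LinearMap.range (f (u l)) ≤ W0 := fun l =>
    Finset.le_sup (f := fun l : Fin m => LinearMap.range (f (u l))) (Finset.mem_univ l)
  have key : ∀ (g : U) (w : W), f g w ∈ W0 := by
    intro g w
    have hg : (⟨f g, LinearMap.mem_range_self f g⟩ : R) =
        ∑ l, bR.repr ⟨f g, LinearMap.mem_range_self f g⟩ l • bR l :=
      (bR.sum_repr _).symm
    have hg' : f g = ∑ l, bR.repr ⟨f g, LinearMap.mem_range_self f g⟩ l • (bR l : W →ₗ[K] Z) := by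
      have := congrArg (Subtype.val) hg
      simpa only [Submodule.coe_sum, Submodule.coe_smul] using this
    rw [hg']
    simp only [LinearMap.sum_apply, LinearMap.smul_apply]
    exact Submodule.sum_mem _ fun l _ => Submodule.smul_mem _ _
      (hle l ⟨w, by rw [hu l]⟩)
  have hrange : LinearMap.range (TensorProduct.lift f) ≤ W0 := by
    rw [LinearMap.range_eq_map, ← TensorProduct.span_tmul_eq_top K U W, Submodule.map_span,
      Submodule.span_le]
    rintro x ⟨y, ⟨g, w, rfl⟩, rfl⟩
    simpa using key g w
  calc Module.finrank K (LinearMap.range (TensorProduct.lift f))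
      ≤ Module.finrank K W0 := Submodule.finrank_mono hrange
    _ ≤ ∑ l : Fin m, Module.finrank K (LinearMap.range (f (u l))) :=
        finrank_finset_sup_le _ _
    _ ≤ ∑ _l : Fin m, s := Finset.sum_le_sum fun l _ => h2 (u l)
    _ = m * s := by simp [Finset.sum_const, Finset.card_univ, Nat.smul_one_eq_cast]
    _ ≤ r * s := Nat.mul_le_mul_right s (hm ▸ h1)

end Aux

section Split


set_option linter.unusedSectionVars false

variable {K : Type*} [Field K] {I : Type*} (V : I → Type*)
  [∀ i, AddCommGroup (V i)] [∀ i, Module K (V i)]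

lemma incl_update_of_mem {σ ρ : Set I} (h : σ ⊆ ρ) [DecidableEq ↥σ] [DecidableEq ↥ρ]
    (v : ∀ j : ρ, V j) {i : ↥ρ} (hi : (i : I) ∈ σ) (x : V i) :
    (fun j : σ => Function.update v i x (Set.inclusion h j)) =
      Function.update (fun j : σ => v (Set.inclusion h j)) ⟨i, hi⟩ x := by
  funext j
  rcases eq_or_ne j ⟨i, hi⟩ with rfl | hj
  · rw [Function.update_self]
    exact (Function.update_self (⟨(i : I), hi⟩ : ↥σ) x (fun j : σ => v (Set.inclusion h j))).symm
  · have h1 : Set.inclusion h j ≠ i := by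
      intro e
      apply hj
      apply Subtype.ext
      have e' := congrArg Subtype.val e
      exact e'
    rw [Function.update_of_ne h1, Function.update_of_ne hj]

lemma incl_update_of_not_mem {σ ρ : Set I} (h : σ ⊆ ρ) [DecidableEq ↥ρ]
    (v : ∀ j : ρ, V j) {i : ↥ρ} (hi : (i : I) ∉ σ) (x : V i) :
    (fun j : σ => Function.update v i x (Set.inclusion h j)) =
      fun j : σ => v (Set.inclusion h j) := by
  funext j
  exact Function.update_of_ne (fun e => hi (by rw [← congrArg Subtype.val e]; exact j.2)) _ _

/-- Splitting of `⨂_{i ∈ ρ}` into a part over `σ` and a part over `τ`, when `ρ` is the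
disjoint union of `σ` and `τ`, as a multilinear map. -/
noncomputable def splitPairML {σ τ ρ : Set I} (hσ : σ ⊆ ρ) (hτ : τ ⊆ ρ)
    (hcov : ∀ i : ρ, ((i : I) ∈ σ ∧ (i : I) ∉ τ) ∨ ((i : I) ∉ σ ∧ (i : I) ∈ τ)) :
    MultilinearMap K (fun i : ρ => V i) ((⨂[K] i : σ, V i) ⊗[K] (⨂[K] i : τ, V i)) where
  toFun v := (⨂ₜ[K] i : σ, v (Set.inclusion hσ i)) ⊗ₜ[K] (⨂ₜ[K] i : τ, v (Set.inclusion hτ i))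
  map_update_add' := by
    intro dec v i x y
    classical
    rcases hcov i with ⟨h1, h2⟩ | ⟨h1, h2⟩
    · simp only [incl_update_of_mem V hσ v h1, incl_update_of_not_mem V hτ v h2,
        MultilinearMap.map_update_add, TensorProduct.add_tmul]
    · simp only [incl_update_of_mem V hτ v h2, incl_update_of_not_mem V hσ v h1,
        MultilinearMap.map_update_add, TensorProduct.tmul_add]
  map_update_smul' := by
    intro dec v i c x
    classical
    rcases hcov i with ⟨h1, h2⟩ | ⟨h1, h2⟩
    · simp only [incl_update_of_mem V hσ v h1, incl_update_of_not_mem V hτ v h2,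
        MultilinearMap.map_update_smul, TensorProduct.smul_tmul']
    · simp only [incl_update_of_mem V hτ v h2, incl_update_of_not_mem V hσ v h1,
        MultilinearMap.map_update_smul, TensorProduct.tmul_smul]

/-- Splitting of `⨂_{i ∈ ρ}` into a part over `σ` and a part over `τ`. -/
noncomputable def splitPair {σ τ ρ : Set I} (hσ : σ ⊆ ρ) (hτ : τ ⊆ ρ)
    (hcov : ∀ i : ρ, ((i : I) ∈ σ ∧ (i : I) ∉ τ) ∨ ((i : I) ∉ σ ∧ (i : I) ∈ τ)) :
    (⨂[K] i : ρ, V i) →ₗ[K] ((⨂[K] i : σ, V i) ⊗[K] (⨂[K] i : τ, V i)) :=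
  PiTensorProduct.lift (splitPairML V hσ hτ hcov)

@[simp]
lemma splitPair_tprod {σ τ ρ : Set I} (hσ : σ ⊆ ρ) (hτ : τ ⊆ ρ)
    (hcov : ∀ i : ρ, ((i : I) ∈ σ ∧ (i : I) ∉ τ) ∨ ((i : I) ∉ σ ∧ (i : I) ∈ τ))
    (v : ∀ i : ρ, V i) :
    splitPair V hσ hτ hcov (⨂ₜ[K] i, v i) =
      (⨂ₜ[K] i : σ, v (Set.inclusion hσ i)) ⊗ₜ[K] (⨂ₜ[K] i : τ, v (Set.inclusion hτ i)) := by
  simp [splitPair, splitPairML]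

variable {A B : Set I}

open Classical in
/-- Combine families indexed by `A` and by `B` into a family indexed by `A ∪ B`. -/
noncomputable def elimAB (a : ∀ i : A, V i) (b : ∀ i : B, V i) (i : ↥(A ∪ B)) : V i :=
  if h : (i : I) ∈ A then a ⟨i, h⟩ else b ⟨i, i.2.resolve_left h⟩

lemma elimAB_update_left [DecidableEq ↥A] [DecidableEq ↥(A ∪ B)]
    (a : ∀ i : A, V i) (b : ∀ i : B, V i) (i : ↥A) (x : V i) :
    elimAB V (Function.update a i x) b =
      Function.update (elimAB V a b) (Set.inclusion Set.subset_union_left i) x := by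
  funext j
  by_cases hj : (j : I) ∈ A
  · rcases eq_or_ne j (Set.inclusion Set.subset_union_left i) with rfl | hne
    · rw [Function.update_self]
      simp only [elimAB]
      rw [dif_pos i.2]
      exact Function.update_self i x a
    · rw [Function.update_of_ne hne]
      simp only [elimAB]
      rw [dif_pos hj, dif_pos hj]
      have : (⟨(j : I), hj⟩ : ↥A) ≠ i := by
        intro e
        apply hne
        apply Subtype.ext
        have e' := congrArg Subtype.val e
        exact e'
      rw [Function.update_of_ne this]
  · have hne : j ≠ Set.inclusion Set.subset_union_left i := by
      intro e
      exact hj (by rw [congrArg Subtype.val e]; exact i.2)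
    rw [Function.update_of_ne hne]
    simp only [elimAB]
    rw [dif_neg hj, dif_neg hj]

lemma elimAB_update_right (hd : Disjoint A B) [DecidableEq ↥B] [DecidableEq ↥(A ∪ B)]
    (a : ∀ i : A, V i) (b : ∀ i : B, V i) (i : ↥B) (x : V i) :
    elimAB V a (Function.update b i x) =
      Function.update (elimAB V a b) (Set.inclusion Set.subset_union_right i) x := by
  have hiA : ((Set.inclusion (Set.subset_union_right (s := A)) i : ↥(A ∪ B)) : I) ∉ A :=
    fun h => Set.disjoint_left.mp hd h i.2
  funext j
  by_cases hj : (j : I) ∈ A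
  · have hne : j ≠ Set.inclusion Set.subset_union_right i := by
      intro e; exact (e ▸ hj : ((Set.inclusion (Set.subset_union_right (s := A)) i : ↥(A ∪ B)) : I) ∈ A) |> hiA
    rw [Function.update_of_ne hne]
    simp only [elimAB]
    rw [dif_pos hj, dif_pos hj]
  · rcases eq_or_ne j (Set.inclusion Set.subset_union_right i) with rfl | hne
    · rw [Function.update_self]
      simp only [elimAB]
      rw [dif_neg hj]
      exact Function.update_self i x b
    · rw [Function.update_of_ne hne]
      simp only [elimAB]
      rw [dif_neg hj, dif_neg hj]
      have : (⟨(j : I), (j.2.resolve_left hj)⟩ : ↥B) ≠ i := by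
        intro e
        apply hne
        apply Subtype.ext
        have e' := congrArg Subtype.val e
        exact e'
      rw [Function.update_of_ne this]

/-- The inner multilinear map for combining `⨂_A ⊗ ⨂_B → ⨂_{A ∪ B}`. -/
noncomputable def innerML (hd : Disjoint A B) (a : ∀ i : A, V i) :
    MultilinearMap K (fun i : B => V i) (⨂[K] i : ↥(A ∪ B), V i) where
  toFun b := ⨂ₜ[K] i, elimAB V a b i
  map_update_add' := by
    intro dec b i x y
    classical
    simp only [elimAB_update_right V hd, MultilinearMap.map_update_add]
  map_update_smul' := by
    intro dec b i c x
    classical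
    simp only [elimAB_update_right V hd, MultilinearMap.map_update_smul]

/-- The canonical map `⨂_A → ⨂_B → ⨂_{A ∪ B}` as a bilinear map. -/
noncomputable def combine2 (hd : Disjoint A B) :
    (⨂[K] i : A, V i) →ₗ[K] (⨂[K] i : B, V i) →ₗ[K] ⨂[K] i : ↥(A ∪ B), V i :=
  PiTensorProduct.lift
  { toFun := fun a => PiTensorProduct.lift (innerML V hd a)
    map_update_add' := by
      intro dec a i x y
      classical
      refine PiTensorProduct.ext (MultilinearMap.ext fun b => ?_)
      simp only [LinearMap.compMultilinearMap_apply, LinearMap.add_apply, lift.tprod, innerML,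
        MultilinearMap.coe_mk, elimAB_update_left, MultilinearMap.map_update_add]
    map_update_smul' := by
      intro dec a i c x
      classical
      refine PiTensorProduct.ext (MultilinearMap.ext fun b => ?_)
      simp only [LinearMap.compMultilinearMap_apply, LinearMap.smul_apply, lift.tprod, innerML,
        MultilinearMap.coe_mk, elimAB_update_left, MultilinearMap.map_update_smul] }

lemma hcovAB (hd : Disjoint A B) :
    ∀ i : ↥(A ∪ B), ((i : I) ∈ A ∧ (i : I) ∉ B) ∨ ((i : I) ∉ A ∧ (i : I) ∈ B) := by
  intro i
  rcases i.2 with h | h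
  · exact Or.inl ⟨h, Set.disjoint_left.mp hd h⟩
  · exact Or.inr ⟨Set.disjoint_right.mp hd h, h⟩

lemma combine2_splitPair (hd : Disjoint A B) (t : ⨂[K] i : ↥(A ∪ B), V i) :
    TensorProduct.lift (combine2 (K := K) V hd)
      (splitPair V Set.subset_union_left Set.subset_union_right (hcovAB hd) t) = t := by
  have : (TensorProduct.lift (combine2 (K := K) V hd)) ∘ₗ
      (splitPair V Set.subset_union_left Set.subset_union_right (hcovAB hd)) = LinearMap.id := by
    refine PiTensorProduct.ext (MultilinearMap.ext fun v => ?_)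
    simp only [LinearMap.compMultilinearMap_apply, LinearMap.coe_comp, Function.comp_apply,
      splitPair_tprod, TensorProduct.lift.tmul, combine2, lift.tprod, MultilinearMap.coe_mk,
      innerML, LinearMap.id_apply]
    congr 1
    funext i
    simp only [elimAB]
    split <;> rfl
  exact DFunLike.congr_fun this t

lemma splitPair_injective (hd : Disjoint A B) :
    Function.Injective
      (splitPair (K := K) V Set.subset_union_left Set.subset_union_right (hcovAB hd)) :=
  Function.LeftInverse.injective (combine2_splitPair V hd)

end Split

section Contr

set_option linter.unusedSectionVars false

variable {K : Type*} [Field K] {I : Type*} (V : I → Type*)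
  [∀ i, AddCommGroup (V i)] [∀ i, Module K (V i)]

/-- Contraction of the left factor, as a map on dual vectors. -/
noncomputable def contrAux {M N P : Type*} [AddCommGroup M] [Module K M] [AddCommGroup N]
    [Module K N] [AddCommGroup P] [Module K P] (m : M →ₗ[K] N ⊗[K] P) :
    Module.Dual K N →ₗ[K] M →ₗ[K] P where
  toFun h := (TensorProduct.lid K P).toLinearMap ∘ₗ LinearMap.rTensor P h ∘ₗ m
  map_add' h₁ h₂ := by
    ext x
    simp [LinearMap.rTensor_add]
  map_smul' c h := by
    ext x
    simp [LinearMap.rTensor_smul]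

lemma contrAux_apply {M N P : Type*} [AddCommGroup M] [Module K M] [AddCommGroup N]
    [Module K N] [AddCommGroup P] [Module K P] (m : M →ₗ[K] N ⊗[K] P)
    (h : Module.Dual K N) (x : M) :
    contrAux m h x = TensorProduct.lid K P (LinearMap.rTensor P h (m x)) := rfl

lemma contractionMap_eq_contrAux (S : Set I) (t : ⨂[K] i, V i)
    (g : Module.Dual K (⨂[K] i : S, V i)) :
    contractionMap K V S t g = contrAux (splitMap K V S) g t := rfl

@[simp]
lemma splitMap_tprod (S : Set I) (v : ∀ i, V i) :
    splitMap K V S (⨂ₜ[K] i, v i) =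
      (⨂ₜ[K] i : S, v i) ⊗ₜ[K] (⨂ₜ[K] i : ↥(Sᶜ), v i) := by
  simp [splitMap, splitML]

end Contr

section Main

variable {K : Type*} [Field K] {I : Type*} [Fintype I] (V : I → Type*)
  [∀ i, AddCommGroup (V i)] [∀ i, Module K (V i)] [∀ i, FiniteDimensional K (V i)]

lemma flatRank_union_le (A B : Set I) (hd : Disjoint A B) (t : ⨂[K] i, V i) :
    flatRank K V (A ∪ B) t ≤ flatRank K V A t * flatRank K V B t := by
  classical
  haveI : ∀ (σ : Set I), Fintype ↥σ := fun σ => (σ.toFinite).fintype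
  haveI hfin : ∀ (σ : Set I), FiniteDimensional K (⨂[K] i : σ, V i) := fun σ =>
    piTensor_finite (fun i : σ => V i)
  -- the splitting maps
  have hBsub : B ⊆ Aᶜ := fun x hx => Set.disjoint_right.mp hd hx
  have hCsubA : (A ∪ B)ᶜ ⊆ Aᶜ := Set.compl_subset_compl.mpr Set.subset_union_left
  have hcov1 : ∀ i : ↥(Aᶜ), ((i : I) ∈ B ∧ (i : I) ∉ (A ∪ B)ᶜ) ∨
      ((i : I) ∉ B ∧ (i : I) ∈ (A ∪ B)ᶜ) := by
    intro i
    by_cases hB : (i : I) ∈ B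
    · exact Or.inl ⟨hB, fun hc => hc (Or.inr hB)⟩
    · exact Or.inr ⟨hB, fun hc => hc.elim i.2 hB⟩
  have hAsub : A ⊆ Bᶜ := fun x hx => Set.disjoint_left.mp hd hx
  have hCsubB : (A ∪ B)ᶜ ⊆ Bᶜ := Set.compl_subset_compl.mpr Set.subset_union_right
  have hcov2 : ∀ i : ↥(Bᶜ), ((i : I) ∈ A ∧ (i : I) ∉ (A ∪ B)ᶜ) ∨
      ((i : I) ∉ A ∧ (i : I) ∈ (A ∪ B)ᶜ) := by
    intro i
    by_cases hA : (i : I) ∈ A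
    · exact Or.inl ⟨hA, fun hc => hc (Or.inl hA)⟩
    · exact Or.inr ⟨hA, fun hc => hc.elim hA i.2⟩
  set split2 := splitPair (K := K) V Set.subset_union_left Set.subset_union_right (hcovAB hd)
    with hsplit2
  set splitBC := splitPair (K := K) V hBsub hCsubA hcov1 with hsplitBC
  set splitAC := splitPair (K := K) V hAsub hCsubB hcov2 with hsplitAC
  set μ := split2.dualMap ∘ₗ
    TensorProduct.dualDistrib K (⨂[K] i : A, V i) (⨂[K] i : B, V i) with hμ
  have hdd : Function.Surjective
      (TensorProduct.dualDistrib K (⨂[K] i : A, V i) (⨂[K] i : B, V i)) := by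
    intro φ
    obtain ⟨x, hx⟩ := (TensorProduct.dualDistribEquiv K
      (⨂[K] i : A, V i) (⨂[K] i : B, V i)).surjective φ
    refine ⟨x, ?_⟩
    simpa [TensorProduct.dualDistribEquiv, TensorProduct.dualDistribEquivOfBasis,
      LinearEquiv.ofLinear_apply] using hx
  have hμsurj : Function.Surjective μ :=
    (LinearMap.dualMap_surjective_of_injective (splitPair_injective V hd)).comp hdd
  set T := contractionMap K V (A ∪ B) t ∘ₗ μ with hT
  have hrange : LinearMap.range (contractionMap K V (A ∪ B) t) = LinearMap.range T := by
    rw [hT, LinearMap.range_comp, LinearMap.range_eq_top.mpr hμsurj, Submodule.map_top]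
  set F := TensorProduct.curry T with hF
  have hliftF : TensorProduct.lift F = T := by
    apply TensorProduct.ext'
    intro g h
    simp [hF]
  -- the two key identities
  have id1 : ∀ (g : Module.Dual K (⨂[K] i : A, V i)) (h : Module.Dual K (⨂[K] i : B, V i)),
      contrAux (splitMap K V (A ∪ B)) (μ (g ⊗ₜ[K] h)) =
        contrAux splitBC h ∘ₗ contrAux (splitMap K V A) g := by
    intro g h
    refine PiTensorProduct.ext (MultilinearMap.ext fun v => ?_)
    simp only [LinearMap.compMultilinearMap_apply, LinearMap.coe_comp, Function.comp_apply,
      contrAux_apply, splitMap_tprod, hμ, hsplit2, hsplitBC, LinearMap.dualMap_apply,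
      splitPair_tprod, TensorProduct.dualDistrib_apply, LinearMap.rTensor_tmul,
      TensorProduct.lid_tmul, map_smul, smul_smul]
  have id2 : ∀ (g : Module.Dual K (⨂[K] i : A, V i)) (h : Module.Dual K (⨂[K] i : B, V i)),
      contrAux (splitMap K V (A ∪ B)) (μ (g ⊗ₜ[K] h)) =
        contrAux splitAC g ∘ₗ contrAux (splitMap K V B) h := by
    intro g h
    refine PiTensorProduct.ext (MultilinearMap.ext fun v => ?_)
    simp only [LinearMap.compMultilinearMap_apply, LinearMap.coe_comp, Function.comp_apply,
      contrAux_apply, splitMap_tprod, hμ, hsplit2, hsplitAC, LinearMap.dualMap_apply,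
      splitPair_tprod, TensorProduct.dualDistrib_apply, LinearMap.rTensor_tmul,
      TensorProduct.lid_tmul, map_smul, smul_smul]
    rw [mul_comm]
  -- the ranks
  have h1 : Module.finrank K (LinearMap.range F) ≤ flatRank K V A t := by
    have hsub : LinearMap.range F ≤ Submodule.map ((contrAux splitBC).flip)
        (LinearMap.range (contractionMap K V A t)) := by
      rintro _ ⟨g, rfl⟩
      refine ⟨contractionMap K V A t g, LinearMap.mem_range_self _ g, ?_⟩
      ext h
      rw [contractionMap_eq_contrAux]
      have := congrArg (fun (φ : (⨂[K] i, V i) →ₗ[K] _) => φ t) (id1 g h)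
      simp only [LinearMap.coe_comp, Function.comp_apply] at this
      simp only [LinearMap.flip_apply]
      rw [← this]
      simp [hF, TensorProduct.curry_apply, hT, contractionMap_eq_contrAux]
    refine le_trans (Submodule.finrank_mono hsub) ?_
    exact (Submodule.finrank_map_le _ _).trans le_rfl
  have h2 : ∀ g, Module.finrank K (LinearMap.range (F g)) ≤ flatRank K V B t := by
    intro g
    have hsub : LinearMap.range (F g) ≤ Submodule.map (contrAux splitAC g)
        (LinearMap.range (contractionMap K V B t)) := by
      rintro _ ⟨h, rfl⟩
      refine ⟨contractionMap K V B t h, LinearMap.mem_range_self _ h, ?_⟩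
      rw [contractionMap_eq_contrAux]
      have := congrArg (fun (φ : (⨂[K] i, V i) →ₗ[K] _) => φ t) (id2 g h)
      simp only [LinearMap.coe_comp, Function.comp_apply] at this
      rw [← this]
      simp [hF, TensorProduct.curry_apply, hT, contractionMap_eq_contrAux]
    refine le_trans (Submodule.finrank_mono hsub) ?_
    exact (Submodule.finrank_map_le _ _).trans le_rfl
  calc flatRank K V (A ∪ B) t = Module.finrank K (LinearMap.range (TensorProduct.lift F)) := by
        rw [flatRank, hrange, hliftF]
    _ ≤ flatRank K V A t * flatRank K V B t := bilin_rank F _ _ h1 h2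

lemma flatRank_empty_le (t : ⨂[K] i, V i) : flatRank K V (∅ : Set I) t ≤ 1 := by
  classical
  haveI : ∀ (σ : Set I), Fintype ↥σ := fun σ => (σ.toFinite).fintype
  haveI hfin : ∀ (σ : Set I), FiniteDimensional K (⨂[K] i : σ, V i) := fun σ =>
    piTensor_finite (fun i : σ => V i)
  have h := LinearMap.finrank_range_le (contractionMap K V (∅ : Set I) t)
  refine h.trans ?_
  rw [Subspace.dual_finrank_eq]
  rw [LinearEquiv.finrank_eq (PiTensorProduct.isEmptyEquiv (↥(∅ : Set I)))]
  simp

end Main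

/-- Submultiplicativity of flattening ranks: if `S_1, …, S_k` are pairwise disjoint
subsets of `I` with union `S`, then `rk_S(t) ≤ ∏ j, rk_{S_j}(t)`. -/
theorem statement4 {K : Type*} [Field K] {I : Type*} [Fintype I] (V : I → Type*)
    [∀ i, AddCommGroup (V i)] [∀ i, Module K (V i)] [∀ i, FiniteDimensional K (V i)]
    (t : ⨂[K] i, V i) (k : ℕ) (Sf : Fin k → Set I)
    (hdisj : ∀ i j, i ≠ j → Disjoint (Sf i) (Sf j))
    (S : Set I) (hS : (⋃ j, Sf j) = S) :
    flatRank K V S t ≤ ∏ j, flatRank K V (Sf j) t := by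
  subst hS
  induction k with
  | zero =>
    rw [show (⋃ j : Fin 0, Sf j) = ∅ from Set.iUnion_of_empty Sf]
    simpa using flatRank_empty_le V t
  | succ k ih =>
    have hU : (⋃ j, Sf j) = Sf 0 ∪ ⋃ j : Fin k, Sf j.succ := by
      ext x
      simp [Set.mem_iUnion, Fin.exists_fin_succ]
    rw [hU, Fin.prod_univ_succ]
    have hd0 : Disjoint (Sf 0) (⋃ j : Fin k, Sf j.succ) :=
      Set.disjoint_iUnion_right.mpr fun j => hdisj 0 j.succ (Fin.succ_ne_zero j).symm
    refine (flatRank_union_le V _ _ hd0 t).trans ?_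
    refine Nat.mul_le_mul_left _ (ih (fun j => Sf j.succ) ?_)
    intro i j hij
    exact hdisj i.succ j.succ (fun e => hij (Fin.succ_injective _ e))

end TNS
end

section
/- Let T be a full binary rooted tree with vertex set V and leaf set L, and let S be a subset of L with ∅ ≠ S ≠ L. Let w = lca(L ∖ S) be the lowest common ancestor of the leaves in L ∖ S. Then anti(w) ⊆ S, and S is exactly the union of anti(w) together with the sets des(v) taken over the maximal elements v of the subposet {u ∈ V : u is a descendant of w and des(u) ⊆ S}. In particular, S is a union of at most maxima({u ∈ V : u ≤ w and des(u) ⊆ S}) + 1 doad sets of T, where maxima(P) denotes the number of maximal elements of a finite poset P. -/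
open TensorProduct PiTensorProduct

namespace TNS

namespace BTree

variable {L : Type*}

/-- The up-set `T_{≥S}`: the set of vertices of `t` which are ancestors of some
leaf in `S` (every leaf being an ancestor of itself). -/
def upSet (t : BTree L) (S : Set L) : Set (List Bool) :=
  {p | t.IsVertex p ∧ ∃ l ∈ S, l ∈ t.des p}

/-- The maximal elements of the set `A` of vertices of `t`, in the descendant order
(`p` is a descendant of `q` iff `q <+: p`, so `p` is maximal in `A` iff no vertex of
`A` other than `p` is an ancestor of `p`). -/
def maximalsIn (t : BTree L) (A : Set (List Bool)) : Set (List Bool) :=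
  {p | t.IsVertex p ∧ p ∈ A ∧ ∀ q, t.IsVertex q → q ∈ A → q <+: p → q = p}

open Classical in
/-- The lowest common ancestor of the set `S` of leaves: the longest path `p` such
that all leaves in `S` descend from the vertex at `p`. -/
noncomputable def lcaPath : BTree L → Set L → List Bool
  | .leaf _, _ => []
  | .node lt rt, S =>
    if S ⊆ lt.leafSet then false :: lt.lcaPath S
    else if S ⊆ rt.leafSet then true :: rt.lcaPath S
    else []

end BTree

section AuxLemmas

variable {L : Type*}

lemma des_of_subtreeAt {t : BTree L} {p : List Bool} {s : BTree L}
    (h : t.subtreeAt p = some s) : t.des p = s.leafSet := by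
  unfold BTree.des; rw [h]

lemma des_of_subtreeAt_none {t : BTree L} {p : List Bool}
    (h : t.subtreeAt p = none) : t.des p = ∅ := by
  unfold BTree.des; rw [h]

lemma subtreeAt_append (t : BTree L) (p q : List Bool) :
    t.subtreeAt (p ++ q) = (t.subtreeAt p).bind (fun s => s.subtreeAt q) := by
  induction p generalizing t with
  | nil => simp [BTree.subtreeAt]
  | cons b p ih =>
    cases t with
    | leaf l => simp [BTree.subtreeAt]
    | node lt rt => cases b <;> simp [BTree.subtreeAt, ih]

lemma des_subset_leafSet (t : BTree L) (p : List Bool) : t.des p ⊆ t.leafSet := by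
  induction t generalizing p with
  | leaf l =>
    cases p with
    | nil => rw [des_of_subtreeAt (t := BTree.leaf l) (p := []) (s := BTree.leaf l) rfl]
    | cons b q => rw [des_of_subtreeAt_none (t := BTree.leaf l) (p := b :: q) rfl]; simp
  | node lt rt ihl ihr =>
    cases p with
    | nil => rw [des_of_subtreeAt (t := BTree.node lt rt) (p := []) (s := BTree.node lt rt) rfl]
    | cons b q =>
      have hmem : ∀ x : L, x ∈ lt.leafSet ∨ x ∈ rt.leafSet → x ∈ (BTree.node lt rt).leafSet := by
        intro x hx
        simp only [BTree.leafSet, BTree.leafList, Set.mem_setOf_eq, List.mem_append] at *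
        exact hx
      cases b with
      | false =>
        have : (BTree.node lt rt).des (false :: q) = lt.des q := by
          unfold BTree.des; rfl
        rw [this]; intro x hx; exact hmem x (Or.inl (ihl q hx))
      | true =>
        have : (BTree.node lt rt).des (true :: q) = rt.des q := by
          unfold BTree.des; rfl
        rw [this]; intro x hx; exact hmem x (Or.inr (ihr q hx))

lemma des_prefix_subset (t : BTree L) {q p : List Bool} (h : q <+: p) :
    t.des p ⊆ t.des q := by
  obtain ⟨r, rfl⟩ := h
  rcases hs : t.subtreeAt q with _ | s
  · rw [des_of_subtreeAt_none (by rw [subtreeAt_append, hs]; rfl)]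
    exact Set.empty_subset _
  · have h1 : t.subtreeAt (q ++ r) = s.subtreeAt r := by rw [subtreeAt_append, hs]; rfl
    rw [des_of_subtreeAt hs]
    rcases hs' : s.subtreeAt r with _ | s'
    · rw [des_of_subtreeAt_none (h1.trans hs')]; exact Set.empty_subset _
    · rw [des_of_subtreeAt (h1.trans hs')]
      have := des_subset_leafSet s r
      rwa [des_of_subtreeAt hs'] at this

lemma lca_spec (t : BTree L) (S : Set L) (hS : S ⊆ t.leafSet) :
    t.IsVertex (t.lcaPath S) ∧ S ⊆ t.des (t.lcaPath S) := by
  induction t with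
  | leaf l =>
    refine ⟨by simp [BTree.lcaPath, BTree.IsVertex, BTree.subtreeAt], ?_⟩
    rw [show (BTree.leaf l : BTree L).lcaPath S = [] from rfl,
      des_of_subtreeAt (t := BTree.leaf l) (p := []) (s := BTree.leaf l) rfl]
    exact hS
  | node lt rt ihl ihr =>
    classical
    by_cases h1 : S ⊆ lt.leafSet
    · have hl := ihl h1
      have hpath : (BTree.node lt rt).lcaPath S = false :: lt.lcaPath S := by
        simp [BTree.lcaPath, h1]
      constructor
      · rw [hpath]; exact hl.1
      · rw [hpath, show (BTree.node lt rt).des (false :: lt.lcaPath S) = lt.des (lt.lcaPath S)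
          from by unfold BTree.des; rfl]
        exact hl.2
    · by_cases h2 : S ⊆ rt.leafSet
      · have hr := ihr h2
        have hpath : (BTree.node lt rt).lcaPath S = true :: rt.lcaPath S := by
          simp [BTree.lcaPath, h1, h2]
        constructor
        · rw [hpath]; exact hr.1
        · rw [hpath, show (BTree.node lt rt).des (true :: rt.lcaPath S) = rt.des (rt.lcaPath S)
            from by unfold BTree.des; rfl]
          exact hr.2
      · have hpath : (BTree.node lt rt).lcaPath S = [] := by
          simp [BTree.lcaPath, h1, h2]
        rw [hpath]
        refine ⟨by simp [BTree.IsVertex, BTree.subtreeAt], ?_⟩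
        rw [des_of_subtreeAt (t := BTree.node lt rt) (p := []) (s := BTree.node lt rt) rfl]
        exact hS

lemma exists_leaf_path (t : BTree L) {l : L} (hl : l ∈ t.leafSet) :
    ∃ p, t.subtreeAt p = some (BTree.leaf l) := by
  induction t with
  | leaf l' =>
    have : l = l' := by
      simpa [BTree.leafSet, BTree.leafList] using hl
    exact ⟨[], by rw [this]; rfl⟩
  | node lt rt ihl ihr =>
    have : l ∈ lt.leafSet ∨ l ∈ rt.leafSet := by
      simpa [BTree.leafSet, BTree.leafList, List.mem_append] using hl
    rcases this with h | h
    · obtain ⟨p, hp⟩ := ihl h; exact ⟨false :: p, hp⟩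
    · obtain ⟨p, hp⟩ := ihr h; exact ⟨true :: p, hp⟩

lemma vertexSet_finite (t : BTree L) : {p | t.IsVertex p}.Finite := by
  induction t with
  | leaf l =>
    refine (Set.finite_singleton ([] : List Bool)).subset ?_
    intro p hp
    cases p with
    | nil => rfl
    | cons b q => simp [BTree.IsVertex, BTree.subtreeAt] at hp
  | node lt rt ihl ihr =>
    refine (((ihl.image (List.cons false)).union (ihr.image (List.cons true))).insert
      ([] : List Bool)).subset ?_
    intro p hp
    cases p with
    | nil => exact Set.mem_insert _ _
    | cons b q =>
      apply Set.mem_insert_of_mem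
      cases b with
      | false => exact Or.inl ⟨q, hp, rfl⟩
      | true => exact Or.inr ⟨q, hp, rfl⟩

lemma exists_maximal (t : BTree L) (A : Set (List Bool)) :
    ∀ n p0, p0.length ≤ n → t.IsVertex p0 → p0 ∈ A →
      ∃ q ∈ t.maximalsIn A, q <+: p0 := by
  intro n
  induction n with
  | zero =>
    intro p0 hlen hv hA
    have hp0 : p0 = [] := List.length_eq_zero_iff.mp (Nat.le_zero.mp hlen)
    subst hp0
    exact ⟨[], ⟨hv, hA, fun q _ _ hq => List.prefix_nil.mp hq⟩, List.prefix_refl _⟩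
  | succ n ih =>
    intro p0 hlen hv hA
    by_cases hmax : ∀ q, t.IsVertex q → q ∈ A → q <+: p0 → q = p0
    · exact ⟨p0, ⟨hv, hA, hmax⟩, List.prefix_refl _⟩
    · push_neg at hmax
      obtain ⟨q, hqv, hqA, hqp, hne⟩ := hmax
      have hlt : q.length < p0.length := by
        refine lt_of_le_of_ne hqp.length_le fun hlen' => hne (List.IsPrefix.eq_of_length hqp hlen')
      obtain ⟨r, hr1, hr2⟩ := ih q (by omega) hqv hqA
      exact ⟨r, hr1, hr2.trans hqp⟩

end AuxLemmas

/-- For `∅ ≠ S ≠ L` and `w = lca(L ∖ S)` one has `anti w ⊆ S`, and `S` is exactly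
the union of `anti w` and the sets `des v` over the maximal elements of the subposet
`{u ∈ V : u ≤ w, des u ⊆ S}`; in particular `S` is a union of at most
`maxima({u : u ≤ w, des u ⊆ S}) + 1` doad sets of `T`. -/
theorem statement10 {L : Type*} (t : BTree L) (hnd : t.leafList.Nodup)
    (S : Set L) (hS : S ⊆ t.leafSet) (hne : S.Nonempty) (hSL : S ≠ t.leafSet) :
    t.anti (t.lcaPath (t.leafSet \ S)) ⊆ S ∧
    (S = t.anti (t.lcaPath (t.leafSet \ S)) ∪
      ⋃ p ∈ t.maximalsIn {q | t.lcaPath (t.leafSet \ S) <+: q ∧ t.des q ⊆ S}, t.des p) ∧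
    t.IsUnionOfAtMostDoads
      ((t.maximalsIn {q | t.lcaPath (t.leafSet \ S) <+: q ∧ t.des q ⊆ S}).ncard + 1)
      S := by
  classical
  set w := t.lcaPath (t.leafSet \ S) with hw
  obtain ⟨hwv, hwsub⟩ := lca_spec t (t.leafSet \ S) Set.diff_subset
  -- Part 1
  have h1 : t.anti w ⊆ S := by
    intro x hx
    by_contra hxS
    exact hx.2 (hwsub ⟨hx.1, hxS⟩)
  set A : Set (List Bool) := {q | w <+: q ∧ t.des q ⊆ S} with hA
  set M := t.maximalsIn A with hM
  -- Part 2
  have h2 : S = t.anti w ∪ ⋃ p ∈ M, t.des p := by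
    apply Set.Subset.antisymm
    · intro l hl
      by_cases hld : l ∈ t.des w
      · -- find a maximal element above the leaf path of l
        have hwvs : ∃ s, t.subtreeAt w = some s := by
          rcases hws : t.subtreeAt w with _ | s
          · rw [BTree.IsVertex, hws] at hwv; simp at hwv
          · exact ⟨s, rfl⟩
        obtain ⟨s, hs⟩ := hwvs
        have hls : l ∈ s.leafSet := by rwa [des_of_subtreeAt hs] at hld
        obtain ⟨p', hp'⟩ := exists_leaf_path s hls
        set p0 : List Bool := w ++ p' with hp0
        have hstp0 : t.subtreeAt p0 = some (BTree.leaf l) := by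
          rw [hp0, subtreeAt_append, hs]; exact hp'
        have hp0v : t.IsVertex p0 := by rw [BTree.IsVertex, hstp0]; rfl
        have hp0des : t.des p0 = {x | x ∈ [l]} := by
          rw [des_of_subtreeAt hstp0]; rfl
        have hp0A : p0 ∈ A := by
          refine ⟨⟨p', rfl⟩, ?_⟩
          rw [hp0des]
          intro x hx
          have : x = l := by simpa using hx
          rwa [this]
        obtain ⟨q, hqM, hqp⟩ := exists_maximal t A p0.length p0 le_rfl hp0v hp0A
        have hlq : l ∈ t.des q := des_prefix_subset t hqp (by rw [hp0des]; simp)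
        exact Or.inr (Set.mem_biUnion hqM hlq)
      · exact Or.inl ⟨hS hl, hld⟩
    · intro x hx
      rcases hx with hx | hx
      · exact h1 hx
      · obtain ⟨p, hpM, hxp⟩ := Set.mem_iUnion₂.mp hx
        exact hpM.2.1.2 hxp
  refine ⟨h1, h2, ?_⟩
  -- Part 3
  have hMfin : M.Finite := (vertexSet_finite t).subset fun p hp => hp.1
  haveI : Fintype M := hMfin.fintype
  have hcard : Fintype.card M = M.ncard := by
    rw [← Nat.card_coe_set_eq, Nat.card_eq_fintype_card]
  have e : M ≃ Fin M.ncard := Fintype.equivFinOfCardEq hcard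
  refine ⟨M.ncard + 1,
    fun i => Fin.cases (t.anti w) (fun j => t.des ((e.symm j : M) : List Bool)) i,
    le_rfl, ?_, ?_⟩
  · intro i
    refine Fin.cases ?_ ?_ i
    · exact ⟨w, hwv, Or.inr rfl⟩
    · intro j
      exact ⟨((e.symm j : M) : List Bool), (e.symm j).2.1, Or.inl rfl⟩
  · rw [h2]
    ext x
    simp only [Set.mem_iUnion, Set.mem_union, Set.mem_iUnion₂]
    constructor
    · rintro ⟨i, hi⟩
      refine Fin.cases ?_ ?_ i hi
      · intro h; exact Or.inl h
      · intro j h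
        exact Or.inr ⟨_, (e.symm j).2, h⟩
    · rintro (h | ⟨p, hpM, hxp⟩)
      · exact ⟨0, h⟩
      · refine ⟨(e ⟨p, hpM⟩).succ, ?_⟩
        simpa using hxp

end TNS
end

section
/- Let k ≥ 1 and let ℓ be an integer with 0 ≤ ℓ ≤ 2^k − 2. Write ℓ and ℓ+1 as k-digit binary strings. Let h(ℓ) be the number of 1s occurring before the final 0 in the string of ℓ (h(ℓ) = 0 if the string contains no 0), and let h*(ℓ+1) be the number of 0s occurring before the final 1 in the string of ℓ+1 (h*(ℓ+1) = 0 if that string contains no 1). Then h(ℓ) + h*(ℓ+1) ≤ k − 1; in particular min{h(ℓ), h*(ℓ+1)} ≤ (k−1)/2. -/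
open TensorProduct PiTensorProduct

namespace TNS

/-- The `k`-digit binary string of `m < 2 ^ k` (most significant digit first),
as a 0/1-path. -/
def binStr (k m : ℕ) : List Bool := (List.range k).map fun i => m.testBit (k - 1 - i)

/-- The height of a 0/1-string: the number of 1s occurring before the final 0
(and 0 if the string contains no 0). -/
def heightOfStr (p : List Bool) : ℕ := (p.reverse.dropWhile (fun b => b)).count true

/-- The dual height of a 0/1-string: the number of 0s occurring before the final 1
(and 0 if the string contains no 1). -/
def dualHeightOfStr (p : List Bool) : ℕ := (p.reverse.dropWhile (fun b => !b)).count false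

def revStr (k m : ℕ) : List Bool := (List.range k).map (m.testBit ·)

lemma binStr_reverse (k m : ℕ) : (binStr k m).reverse = revStr k m := by
  apply List.ext_getElem
  · simp [binStr, revStr]
  · intro i h1 h2
    have hi : i < k := by simpa [revStr] using h2
    rw [List.getElem_reverse]
    simp only [binStr, revStr, List.getElem_map, List.getElem_range, List.length_map,
      List.length_range]
    congr 1
    omega

lemma revStr_succ (k m : ℕ) :
    revStr (k+1) m = (decide (m % 2 = 1)) :: revStr k (m/2) := by
  simp only [revStr, List.range_succ_eq_map, List.map_cons, List.map_map]
  congr 1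
  · simp [Nat.testBit_zero]
  · apply List.map_congr_left
    intro i _
    simp [Function.comp, Nat.testBit_succ]

lemma count_tt_ff (s : List Bool) : s.count true + s.count false = s.length := by
  induction s with
  | nil => simp
  | cons b t ih => cases b <;> simp [List.count_cons] <;> omega

lemma revStr_length (k m : ℕ) : (revStr k m).length = k := by simp [revStr]

lemma main_aux (k : ℕ) : ∀ l : ℕ, l + 2 ≤ 2 ^ k →
    ((revStr k l).dropWhile (fun b => b)).count true +
      ((revStr k (l+1)).dropWhile (fun b => !b)).count false ≤ k - 1 := by
  induction k with
  | zero => intro l hl; exact absurd hl (by norm_num)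
  | succ k ih =>
    intro l hl
    rcases Nat.even_or_odd l with ⟨m, hm⟩ | ⟨m, hm⟩
    · subst hm
      have h1 : revStr (k+1) (m + m) = false :: revStr k m := by
        rw [revStr_succ]
        have e1 : (m+m) % 2 = 0 := by omega
        have e2 : (m+m) / 2 = m := by omega
        rw [e1, e2]; norm_num
      have h2 : revStr (k+1) (m + m + 1) = true :: revStr k m := by
        rw [revStr_succ]
        have e1 : (m+m+1) % 2 = 1 := by omega
        have e2 : (m+m+1) / 2 = m := by omega
        rw [e1, e2]; norm_num
      rw [h1, h2]
      have hc := count_tt_ff (revStr k m)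
      have hlen := revStr_length k m
      simp [List.count_cons]
      omega
    · subst hm
      have hk1 : 1 ≤ k := by
        rcases Nat.eq_zero_or_pos k with h | h
        · subst h; exact absurd hl (by norm_num)
        · exact h
      have h1 : revStr (k+1) (2*m+1) = true :: revStr k m := by
        rw [revStr_succ]
        have e1 : (2*m+1) % 2 = 1 := by omega
        have e2 : (2*m+1) / 2 = m := by omega
        rw [e1, e2]; norm_num
      have h2 : revStr (k+1) (2*m+1+1) = false :: revStr k (m+1) := by
        rw [revStr_succ]
        have e1 : (2*m+1+1) % 2 = 0 := by omega
        have e2 : (2*m+1+1) / 2 = m+1 := by omega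
        rw [e1, e2]; norm_num
      rw [h1, h2]
      have key := ih m (by omega)
      simp [List.count_cons]
      omega

/-- For `k ≥ 1` and `0 ≤ l ≤ 2^k - 2`, the height of the `k`-digit binary string of
`l` plus the dual height of the `k`-digit binary string of `l + 1` is at most
`k - 1`; in particular their minimum is at most `(k - 1) / 2`. -/
theorem statement16 (k : ℕ) (hk : 1 ≤ k) (l : ℕ) (hl : l ≤ 2 ^ k - 2) :
    heightOfStr (binStr k l) + dualHeightOfStr (binStr k (l + 1)) ≤ k - 1 ∧
    (min (heightOfStr (binStr k l)) (dualHeightOfStr (binStr k (l + 1))) : ℝ) ≤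
      ((k : ℝ) - 1) / 2 := by
  have h2 : 2 ^ 1 ≤ 2 ^ k := Nat.pow_le_pow_right (by norm_num) hk
  have hmain : heightOfStr (binStr k l) + dualHeightOfStr (binStr k (l + 1)) ≤ k - 1 := by
    have := main_aux k l (by omega)
    simpa [heightOfStr, dualHeightOfStr, binStr_reverse] using this
  refine ⟨hmain, ?_⟩
  set a := heightOfStr (binStr k l)
  set b := dualHeightOfStr (binStr k (l + 1))
  have hab : (a : ℝ) + b ≤ (k : ℝ) - 1 := by
    have : ((a + b : ℕ) : ℝ) ≤ ((k - 1 : ℕ) : ℝ) := Nat.cast_le.mpr hmain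
    push_cast [Nat.cast_sub hk] at this
    linarith
  have h1 : (min a b : ℝ) ≤ a := by
    exact_mod_cast Nat.cast_le.mpr (min_le_left a b)
  have h2' : (min a b : ℝ) ≤ b := by
    exact_mod_cast Nat.cast_le.mpr (min_le_right a b)
  linarith

end TNS
end
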